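/- Let R be a connected N-graded algebra over a field K (i.e., R_0 = K) that is NI. Then R is NJ: J(R) = N(R). -/

import Mathlib

/-- The set of nilpotent elements of `R`. -/
def nilSet (R : Type*) [Ring R] : Set R := {x | IsNilpotent x}

/-- A two-sided ideal is nil if all its elements are nilpotent. -/
def TwoSidedIdeal.IsNil {R : Type*} [Ring R] (I : TwoSidedIdeal R) : Prop :=
  ∀ x ∈ I, IsNilpotent x

/-- The upper nilradical of `R`: the sum of all nil two-sided ideals. -/
def upperNilradical (R : Type*) [Ring R] : TwoSidedIdeal R :=
  sSup {I : TwoSidedIdeal R | I.IsNil}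

/-- `R` is an NI ring if its set of nilpotent elements equals its upper nilradical. -/
def IsNIRing (R : Type*) [Ring R] : Prop :=
  (upperNilradical R : Set R) = nilSet R

/-- The Jacobson radical of the ring `R` (intersection of all maximal left ideals). -/
def jacobsonRad (R : Type*) [Ring R] : Ideal R := (⊥ : Ideal R).jacobson

/-!
Let `x ∈ J(R)` and `u = (1 - x)⁻¹`. From `u = 1 + x u` the homogeneous components satisfy
`u_k = ∑_{i + j = k} x_i u_j` for `k > 0`. Since `R` is NI, the nilpotent elements form an ideal `N`
with `a² ∈ N → a ∈ N`, hence `ab ∈ N → ba ∈ N`. A downward induction on `n ≥ 1`, and inside it on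
`j`, gives `x_n u_j ∈ N`: the degree `n + j` part of `u x_n` equals `x_n u_j x_n` modulo `N`.
Taking `j = 0` (`u_0` is a unit) gives `x - x_0 ∈ N ⊆ J(R)`, so `x_0 ∈ J(R) ∩ K = 0`.
-/

open DirectSum Finset

theorem Nat.forall_of_downward_induction {P : ℕ → Prop} (s : Finset ℕ) (h_out : ∀ j ∉ s, P j)
    (step : ∀ j, (∀ m, j < m → P m) → P j) (j : ℕ) : P j := by
  suffices ∀ k j, s.sup id < j + k → P j from this (s.sup id + 1) j (by omega)
  intro k
  induction k with
  | zero => exact fun j hj => h_out j fun hjs => (le_sup (f := id) hjs).not_gt (by simpa using hj)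
  | succ k ih => exact fun j _ => step j fun m _ => ih m (by omega)

def TwoSidedIdeal.IsCompletelySemiprime {R : Type*} [Ring R] (I : TwoSidedIdeal R) : Prop :=
  ∀ a, a * a ∈ I → a ∈ I

namespace TwoSidedIdeal.IsCompletelySemiprime

variable {R : Type*} [Ring R] {I : TwoSidedIdeal R}

theorem mul_mem_comm (hI : I.IsCompletelySemiprime) {a b : R} (h : a * b ∈ I) : b * a ∈ I :=
  hI _ (by simpa only [mul_assoc] using I.mul_mem_left b _ (I.mul_mem_right _ a h))

theorem mul_mem_of_eq_sum_antidiagonal (hI : I.IsCompletelySemiprime) {x u : ℕ → R}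
    (s : Finset ℕ) (hu : ∀ j ∉ s, u j = 0)
    (hrec : ∀ k ≠ 0, u k = ∑ p ∈ antidiagonal k, x p.1 * u p.2)
    {n : ℕ} (hn : n ≠ 0) (hx : ∀ m, n < m → x m ∈ I) (j : ℕ) : x n * u j ∈ I := by
  refine Nat.forall_of_downward_induction (P := fun j => x n * u j ∈ I) s (fun j hj => ?_)
    (fun j ih => ?_) j
  · rw [hu j hj, mul_zero]
    exact I.zero_mem
  -- The degree `n + j` recurrence, multiplied by `x n` on the right, isolates `x n * u j * x n`.
  have hlead : u (n + j) * x n ∈ I := hI.mul_mem_comm (ih _ (by omega))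
  have hrest : ∀ p ∈ antidiagonal (n + j), p ≠ (n, j) → x p.1 * u p.2 * x n ∈ I := by
    rintro ⟨i, k⟩ hp hne
    rw [HasAntidiagonal.mem_antidiagonal] at hp
    rcases lt_or_gt_of_ne (show i ≠ n by rintro rfl; exact hne (Prod.ext rfl (by dsimp; omega)))
      with hi | hi
    · rw [mul_assoc]
      exact I.mul_mem_left _ _ (hI.mul_mem_comm (ih k (by omega)))
    · exact I.mul_mem_right _ _ (I.mul_mem_right _ _ (hx i hi))
  have hmid : x n * u j * x n ∈ I := by
    have hnj : (n, j) ∈ antidiagonal (n + j) := HasAntidiagonal.mem_antidiagonal.2 rfl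
    rw [hrec _ (by omega), sum_mul, ← add_sum_erase _ _ hnj] at hlead
    exact (add_mem_cancel_right (sum_mem fun p hp =>
      hrest p (mem_of_mem_erase hp) (ne_of_mem_erase hp))).1 hlead
  exact hI _ (by simpa only [mul_assoc] using I.mul_mem_right _ (u j) hmid)

end TwoSidedIdeal.IsCompletelySemiprime

section Graded

variable {R σ : Type*} [Ring R] [SetLike σ R] [AddSubgroupClass σ R] (𝒜 : ℕ → σ) [GradedRing 𝒜]

theorem coe_decompose_mul_eq_sum_antidiagonal (a b : R) (n : ℕ) :
    (decompose 𝒜 (a * b) n : R) =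
      ∑ p ∈ antidiagonal n, (decompose 𝒜 a p.1 : R) * decompose 𝒜 b p.2 := by
  rw [decompose_mul, coe_mul_apply_eq_sum_antidiagonal]

theorem TwoSidedIdeal.IsCompletelySemiprime.decompose_mem_of_isUnit_one_sub
    {I : TwoSidedIdeal R} (hI : I.IsCompletelySemiprime) {x : R} (hx : IsUnit (1 - x))
    {n : ℕ} (hn : n ≠ 0) : (decompose 𝒜 x n : R) ∈ I := by
  classical
  obtain ⟨v, hv⟩ := hx
  set u : R := ↑v⁻¹
  have hu : u = 1 + x * u := by
    have h1 : (1 - x) * u = 1 := hv ▸ v.mul_inv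
    refine eq_add_of_sub_eq ?_
    rw [← h1, sub_mul, one_mul]
  have hrec : ∀ k ≠ 0, (decompose 𝒜 u k : R) =
      ∑ p ∈ antidiagonal k, (decompose 𝒜 x p.1 : R) * decompose 𝒜 u p.2 := by
    intro k hk
    conv_lhs => rw [hu]
    rw [decompose_add, DirectSum.add_apply, AddMemClass.coe_add,
      decompose_of_mem_ne 𝒜 SetLike.GradedOne.one_mem hk.symm, zero_add,
      coe_decompose_mul_eq_sum_antidiagonal]
  obtain ⟨w, hw⟩ := v⁻¹.isUnit.map (GradedRing.projZeroRingHom 𝒜)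
  refine Nat.forall_of_downward_induction (P := fun n => n ≠ 0 → (decompose 𝒜 x n : R) ∈ I)
    (decompose 𝒜 x).support (fun n hn _ => ?_) (fun n ih hn => ?_) n hn
  · rw [DFinsupp.notMem_support_iff.1 hn, ZeroMemClass.coe_zero]
    exact I.zero_mem
  have h := hI.mul_mem_of_eq_sum_antidiagonal (decompose 𝒜 u).support
    (fun j hj => by rw [DFinsupp.notMem_support_iff.1 hj, ZeroMemClass.coe_zero]) hrec hn
    (fun m hm => ih m hm (by omega)) 0
  have hu0 : (decompose 𝒜 u 0 : R) = w := hw.symm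
  have h' := I.mul_mem_right _ (↑w⁻¹ : R) h
  rwa [hu0, mul_assoc, w.mul_inv, mul_one] at h'

theorem sub_decompose_zero_mem {I : TwoSidedIdeal R} {x : R}
    (h : ∀ n ≠ 0, (decompose 𝒜 x n : R) ∈ I) : x - decompose 𝒜 x 0 ∈ I := by
  classical
  rw [← sum_support_decompose 𝒜 (x - decompose 𝒜 x 0)]
  refine sum_mem fun n _ => ?_
  rw [decompose_sub, DirectSum.sub_apply, AddSubgroupClass.coe_sub]
  rcases eq_or_ne n 0 with rfl | hn
  · rw [decompose_of_mem_same 𝒜 (SetLike.coe_mem _), sub_self]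
    exact I.zero_mem
  · rw [decompose_of_mem_ne 𝒜 (SetLike.coe_mem _) hn.symm, sub_zero]
    exact h n hn

end Graded

section Jacobson

variable {R : Type*} [Ring R]

theorem isUnit_one_sub_of_mem_jacobsonRad {x : R} (hx : x ∈ jacobsonRad R) : IsUnit (1 - x) := by
  have left_inv : ∀ y ∈ (⊥ : Ideal R).jacobson, ∃ s, s * (1 - y) = 1 := fun y hy => by
    obtain ⟨s, hs⟩ := Ideal.exists_mul_sub_mem_of_sub_one_mem_jacobson (1 - y)
      (by simpa using neg_mem hy)
    exact ⟨s, sub_eq_zero.1 hs⟩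
  obtain ⟨s, hs⟩ := left_inv x hx
  have hs' : 1 - -(s * x) = s := by rw [← hs]; noncomm_ring
  -- `s = 1 + s * x` with `s * x ∈ J`, so `s` is left invertible as well.
  obtain ⟨t, ht⟩ := left_inv _ (neg_mem (Ideal.mul_mem_left _ s hx))
  rw [hs'] at ht
  have hts : t = 1 - x := left_inv_eq_right_inv ht hs
  exact ⟨⟨1 - x, s, hts ▸ ht, hs⟩, rfl⟩

theorem mem_jacobsonRad_of_forall_isNilpotent_mul {x : R} (h : ∀ y, IsNilpotent (y * x)) :
    x ∈ jacobsonRad R := by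
  refine Ideal.mem_jacobson_iff.2 fun y => ?_
  obtain ⟨u, hu⟩ := (h y).isUnit_add_one
  refine ⟨↑u⁻¹, Ideal.mem_bot.2 ?_⟩
  rw [mul_assoc, sub_eq_zero, ← mul_add_one (↑u⁻¹ : R), ← hu, u.inv_mul]

theorem eq_zero_of_mem_one_of_mem_jacobsonRad {K : Type*} [Field K] [Algebra K R] {a : R}
    (ha : a ∈ (1 : Submodule K R)) (hJ : a ∈ jacobsonRad R) : a = 0 := by
  obtain ⟨c, rfl⟩ := Submodule.mem_one.1 ha
  rcases eq_or_ne c 0 with rfl | hc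
  · exact map_zero _
  have htop : (⊥ : Ideal R) = ⊤ :=
    Ideal.jacobson_eq_top_iff.1 (Ideal.eq_top_of_isUnit_mem _ hJ ((IsUnit.mk0 c hc).map _))
  exact Ideal.mem_bot.1 (htop ▸ Submodule.mem_top)

end Jacobson

namespace IsNIRing

variable {R : Type*} [Ring R]

theorem mem_upperNilradical_iff (hNI : IsNIRing R) {x : R} :
    x ∈ upperNilradical R ↔ IsNilpotent x :=
  Set.ext_iff.1 hNI x

theorem isCompletelySemiprime_upperNilradical (hNI : IsNIRing R) :
    (upperNilradical R).IsCompletelySemiprime := fun a ha => by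
  rw [hNI.mem_upperNilradical_iff] at ha ⊢
  exact IsNilpotent.of_pow (m := 2) (by rwa [sq])

theorem nilSet_subset_jacobsonRad (hNI : IsNIRing R) : nilSet R ⊆ jacobsonRad R := fun x hx =>
  mem_jacobsonRad_of_forall_isNilpotent_mul fun y => hNI.mem_upperNilradical_iff.1 <|
    (upperNilradical R).mul_mem_left y x (hNI.mem_upperNilradical_iff.2 hx)

theorem jacobsonRad_subset_nilSet_of_graded {σ : Type*} [SetLike σ R] [AddSubgroupClass σ R]
    (𝒜 : ℕ → σ) [GradedRing 𝒜] (hNI : IsNIRing R)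
    (h0 : ∀ a ∈ 𝒜 0, a ∈ jacobsonRad R → IsNilpotent a) :
    (jacobsonRad R : Set R) ⊆ nilSet R := by
  intro x hx
  have hrest : x - decompose 𝒜 x 0 ∈ upperNilradical R := sub_decompose_zero_mem 𝒜 fun _ hn =>
    hNI.isCompletelySemiprime_upperNilradical.decompose_mem_of_isUnit_one_sub 𝒜
      (isUnit_one_sub_of_mem_jacobsonRad hx) hn
  have hx0 : (decompose 𝒜 x 0 : R) ∈ jacobsonRad R := by
    simpa using sub_mem hx (hNI.nilSet_subset_jacobsonRad (hNI.mem_upperNilradical_iff.1 hrest))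
  rw [← sub_add_cancel x (decompose 𝒜 x 0)]
  exact hNI.mem_upperNilradical_iff.1 <| add_mem hrest <|
    hNI.mem_upperNilradical_iff.2 (h0 _ (SetLike.coe_mem _) hx0)

end IsNIRing

/-- If `R` is a connected `ℕ`-graded algebra over a field `K` (i.e. `R₀ = K`)
which is NI, then `R` is NJ: `J(R) = N(R)`. -/
theorem connected_graded_NI_isNJ (K R : Type*) [Field K] [Ring R] [Algebra K R]
    (𝒜 : ℕ → Submodule K R) [GradedAlgebra 𝒜]
    (hconn : 𝒜 0 = (1 : Submodule K R)) (hNI : IsNIRing R) :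
    (jacobsonRad R : Set R) = nilSet R := by
  refine (hNI.jacobsonRad_subset_nilSet_of_graded 𝒜 fun a ha hJ => ?_).antisymm
    hNI.nilSet_subset_jacobsonRad
  rw [eq_zero_of_mem_one_of_mem_jacobsonRad (hconn ▸ ha) hJ]
  exact IsNilpotent.zero
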